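/- arXiv:2006.02316 — 2 statements merged into one kernel-verified Lean document; each statement's English description precedes it below -/
import Mathlib

section
/- Let p be a prime and f : ℤ_p → ℤ_p a 1-Lipschitz function whose set S(f) of sections at all vertices (k, m), k ≥ 0, 0 ≤ m < p^k, is finite. Then f maps elements with eventually periodic digit expansion to elements with eventually periodic digit expansion: for every x ∈ ℤ_p whose digit expansion is eventually periodic, the digit expansion of f(x) is eventually periodic. -/
/-- `h` is the section of `f` at the vertex `(k, m)`: for some integer `0 ≤ r < p^k`,
`f(m + p^k·y) = r + p^k·h(y)` for all `y ∈ ℤ_p`. -/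
def IsSection (p : ℕ) [Fact p.Prime] (f h : PadicInt p → PadicInt p) (k m : ℕ) : Prop :=
  ∃ r : ℕ, r < p ^ k ∧ ∀ y : PadicInt p,
    f ((m : PadicInt p) + (p : PadicInt p) ^ k * y)
      = (r : PadicInt p) + (p : PadicInt p) ^ k * h y

/-- The set `S(f)` of all sections of `f` at vertices `(k, m)`, `k ≥ 0`, `0 ≤ m < p^k`. -/
def SectionsSet (p : ℕ) [Fact p.Prime] (f : PadicInt p → PadicInt p) :
    Set (PadicInt p → PadicInt p) :=
  {h | ∃ k m : ℕ, m < p ^ k ∧ IsSection p f h k m}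

/-- `x ∈ ℤ_p` has an eventually periodic digit expansion. -/
def HasEventuallyPeriodicDigits (p : ℕ) [Fact p.Prime] (x : PadicInt p) : Prop :=
  ∃ a : ℕ → ℕ, (∀ i, a i < p) ∧
    x = (∑' i : ℕ, (a i : PadicInt p) * (p : PadicInt p) ^ i) ∧
    ∃ l m : ℕ, 1 ≤ m ∧ ∀ i : ℕ, l ≤ i → a (i + m) = a i

/-!
Write `x = m_n + p^n y_n`, where `m_n < p^n` is read off the first `n` digits of `x` and `y_n`
is the tail of its digit expansion, so that `f x = r_n + p^n h_n(y_n)` with `h_n` the section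
of `f` at `(n, m_n)`. Along `n = l + c m` the tails `y_n` all coincide, and as `f` has only
finitely many sections, `h_N = h_{N+T}` for some `N` and `T > 0`. Then `z = h_N(y_N)` satisfies
`r_N + p^N z = r_{N+T} + p^{N+T} z`, whence `z = s + p^T z` with `s < p^T`: the digits of `z`
are those of `s` repeated with period `T`, and `f x = r_N + p^N z` is eventually periodic.
-/

open Finset Function

theorem Nat.sum_range_div_pow_mod_mul_pow (s b n : ℕ) :
    ∑ i ∈ range n, s / b ^ i % b * b ^ i = s % b ^ n := by
  induction n with
  | zero => simp [Nat.mod_one]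
  | succ n ih => rw [sum_range_succ, ih, pow_succ, Nat.mod_mul, Nat.mul_comm (b ^ n)]

theorem Nat.sum_range_mul_pow_lt {b : ℕ} (a : ℕ → ℕ) (ha : ∀ i, a i < b) (n : ℕ) :
    ∑ i ∈ range n, a i * b ^ i < b ^ n := by
  induction n with
  | zero => simp
  | succ n ih =>
    rw [sum_range_succ, pow_succ]
    nlinarith [Nat.mul_le_mul_right (b ^ n) (Nat.succ_le_of_lt (ha n))]

namespace PadicInt

noncomputable def digitSeries (p : ℕ) [Fact p.Prime] (a : ℕ → ℕ) : ℤ_[p] :=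
  ∑' i, (a i : ℤ_[p]) * (p : ℤ_[p]) ^ i

variable {p : ℕ} [hp : Fact p.Prime]

theorem summable_digitSeries (a : ℕ → ℕ) :
    Summable fun i => (a i : ℤ_[p]) * (p : ℤ_[p]) ^ i := by
  have hp_inv : (p : ℝ)⁻¹ < 1 := inv_lt_one_of_one_lt₀ (mod_cast hp.out.one_lt)
  refine .of_norm_bounded (summable_geometric_of_lt_one (by positivity) hp_inv) fun i => ?_
  calc ‖(a i : ℤ_[p]) * (p : ℤ_[p]) ^ i‖
      = ‖(a i : ℤ_[p])‖ * ‖(p : ℤ_[p]) ^ i‖ := norm_mul _ _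
    _ ≤ 1 * ‖(p : ℤ_[p]) ^ i‖ := by gcongr; exact norm_le_one _
    _ = (p : ℝ)⁻¹ ^ i := by rw [one_mul, norm_p_pow, zpow_neg, zpow_natCast, inv_pow]

theorem digitSeries_eq_add_pow_mul (a : ℕ → ℕ) (n : ℕ) :
    digitSeries p a = ((∑ i ∈ range n, a i * p ^ i : ℕ) : ℤ_[p])
      + (p : ℤ_[p]) ^ n * digitSeries p (fun i => a (i + n)) := by
  rw [digitSeries, digitSeries, ← (summable_digitSeries a).sum_add_tsum_nat_add n,
    ← (summable_digitSeries _).tsum_mul_left]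
  push_cast
  congr 1
  exact tsum_congr fun i => by ring

theorem digitSeries_of_lt_pow {r n : ℕ} (hr : r < p ^ n) (b : ℕ → ℕ) :
    digitSeries p (fun i => if i < n then r / p ^ i % p else b (i - n))
      = r + (p : ℤ_[p]) ^ n * digitSeries p b := by
  rw [digitSeries_eq_add_pow_mul _ n,
    sum_congr rfl fun i hi => by rw [if_pos (mem_range.mp hi)], Nat.sum_range_div_pow_mod_mul_pow,
    Nat.mod_eq_of_lt hr]
  simp

-- Both sides are fixed points of `z ↦ s + p^T z`, which has at most one since `p^T ≠ 1`.
theorem eq_digitSeries_of_eq_add_pow_mul {s T : ℕ} (hT : 0 < T) (hs : s < p ^ T) {z : ℤ_[p]}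
    (hz : z = s + (p : ℤ_[p]) ^ T * z) :
    z = digitSeries p (fun i => s / p ^ (i % T) % p) := by
  have hw : digitSeries p (fun i => s / p ^ (i % T) % p)
      = s + (p : ℤ_[p]) ^ T * digitSeries p (fun i => s / p ^ (i % T) % p) := by
    conv_lhs => rw [digitSeries_eq_add_pow_mul _ T]
    rw [sum_congr rfl fun i hi => by rw [Nat.mod_eq_of_lt (mem_range.mp hi)],
      Nat.sum_range_div_pow_mod_mul_pow, Nat.mod_eq_of_lt hs]
    simp only [Nat.add_mod_right]
  generalize digitSeries p (fun i => s / p ^ (i % T) % p) = w at hw ⊢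
  have hpT : ((p ^ T : ℕ) : ℤ_[p]) ≠ 1 := by
    exact_mod_cast (Nat.one_lt_pow hT.ne' hp.out.one_lt).ne'
  have : (1 - (p : ℤ_[p]) ^ T) * (z - w) = 0 := by linear_combination hz - hw
  push_cast at hpT
  exact sub_eq_zero.mp <| (mul_eq_zero.mp this).resolve_left (sub_ne_zero.mpr hpT.symm)

theorem pow_dvd_sub_of_lipschitz {f : ℤ_[p] → ℤ_[p]} (hf : ∀ x y, ‖f x - f y‖ ≤ ‖x - y‖)
    {k : ℕ} {x y : ℤ_[p]} (h : (p : ℤ_[p]) ^ k ∣ x - y) : (p : ℤ_[p]) ^ k ∣ f x - f y := by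
  rw [← Ideal.mem_span_singleton, ← norm_le_pow_iff_mem_span_pow] at h ⊢
  exact (hf x y).trans h

theorem exists_isSection_of_lipschitz {f : ℤ_[p] → ℤ_[p]}
    (hf : ∀ x y, ‖f x - f y‖ ≤ ‖x - y‖) (k M : ℕ) : ∃ h, IsSection p f h k M := by
  have hdvd (y : ℤ_[p]) :
      ∃ w, f (M + (p : ℤ_[p]) ^ k * y) = (f M).appr k + (p : ℤ_[p]) ^ k * w := by
    have hM : (p : ℤ_[p]) ^ k ∣ f M - (f M).appr k :=
      Ideal.mem_span_singleton.mp (appr_spec k _)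
    obtain ⟨w, hw⟩ := (pow_dvd_sub_of_lipschitz hf (x := M + (p : ℤ_[p]) ^ k * y) (y := M)
      ⟨y, by ring⟩).add hM
    exact ⟨w, by linear_combination hw⟩
  choose h hh using hdvd
  exact ⟨h, _, appr_lt _ _, hh⟩

theorem exists_eq_add_pow_mul_self {r r' N T : ℕ} (hr : r < p ^ N) (hr' : r' < p ^ (N + T))
    {z : ℤ_[p]} (h : (r : ℤ_[p]) + (p : ℤ_[p]) ^ N * z = r' + (p : ℤ_[p]) ^ (N + T) * z) :
    ∃ s < p ^ T, z = s + (p : ℤ_[p]) ^ T * z := by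
  have hdvd : ((p ^ N : ℕ) : ℤ) ∣ r' - r := by
    rw [Nat.cast_pow, ← pow_p_dvd_int_iff]
    exact ⟨z - (p : ℤ_[p]) ^ T * z, by push_cast; linear_combination -h⟩
  have hmod : r' % p ^ N = r := by
    rw [← (Nat.modEq_iff_dvd.mpr hdvd), Nat.mod_eq_of_lt hr]
  refine ⟨r' / p ^ N, Nat.div_lt_of_lt_mul (by rwa [← pow_add]), ?_⟩
  have hr'_eq : (r' : ℤ_[p]) = r + (p : ℤ_[p]) ^ N * (r' / p ^ N : ℕ) := by
    exact_mod_cast (hmod ▸ Nat.mod_add_div r' (p ^ N)).symm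
  refine mul_left_cancel₀ (pow_ne_zero N (Nat.cast_ne_zero.mpr hp.out.ne_zero)) ?_
  linear_combination h + hr'_eq

end PadicInt

open PadicInt

theorem hasEventuallyPeriodicDigits_of_eq_add_pow_mul_self {p : ℕ} [hp : Fact p.Prime]
    {s T : ℕ} (hT : 0 < T) (hs : s < p ^ T) {z : ℤ_[p]} (hz : z = s + (p : ℤ_[p]) ^ T * z) :
    HasEventuallyPeriodicDigits p z :=
  ⟨_, fun _ => Nat.mod_lt _ hp.out.pos, eq_digitSeries_of_eq_add_pow_mul hT hs hz, 0, T, hT,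
    fun i _ => by simp only [Nat.add_mod_right]⟩

theorem HasEventuallyPeriodicDigits.natCast_add_pow_mul {p : ℕ} [hp : Fact p.Prime] {z : ℤ_[p]}
    (hz : HasEventuallyPeriodicDigits p z) {r N : ℕ} (hr : r < p ^ N) :
    HasEventuallyPeriodicDigits p (r + (p : ℤ_[p]) ^ N * z) := by
  obtain ⟨b, hb, rfl, l, m, hm, hper⟩ := hz
  refine ⟨_, fun i => ?_, (digitSeries_of_lt_pow hr b).symm, N + l, m, hm, fun i hi => ?_⟩
  · split_ifs
    exacts [Nat.mod_lt _ hp.out.pos, hb _]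
  · simp only [if_neg (show ¬i + m < N by omega), if_neg (show ¬i < N by omega),
      show i + m - N = i - N + m by omega, hper (i - N) (by omega)]

/-- A 1-Lipschitz `f : ℤ_p → ℤ_p` with finitely many sections maps elements with
eventually periodic digit expansion to elements with eventually periodic digit
expansion. -/
theorem finite_state_preserves_eventually_periodic (p : ℕ) [Fact p.Prime]
    (f : PadicInt p → PadicInt p)
    (hf : ∀ x y : PadicInt p, ‖f x - f y‖ ≤ ‖x - y‖)
    (hfin : (SectionsSet p f).Finite) :
    ∀ x : PadicInt p, HasEventuallyPeriodicDigits p x →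
      HasEventuallyPeriodicDigits p (f x) := by
  rintro _ ⟨a, ha, rfl, l, m, hm, hper⟩
  choose g r hr hg using
    fun n => exists_isSection_of_lipschitz hf n (∑ i ∈ range n, a i * p ^ i)
  have hfx (n : ℕ) :
      f (digitSeries p a) = r n + (p : ℤ_[p]) ^ n * g n (digitSeries p fun i => a (i + n)) := by
    rw [digitSeries_eq_add_pow_mul a n, hg]
  have htail (c : ℕ) : (fun i => a (i + (l + c * m))) = fun i => a (i + l) := by
    have hperiodic : Periodic (fun i => a (i + l)) m := fun i =>
      show a (i + m + l) = a (i + l) by rw [add_right_comm]; exact hper _ (Nat.le_add_left l i)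
    funext i
    rw [← add_assoc, add_right_comm]
    exact hperiodic.nat_mul c i
  obtain ⟨d₁, d₂, hd, hgd⟩ := hfin.exists_lt_map_eq_of_forall_mem (t := SectionsSet p f)
    (f := fun c => g (l + c * m))
    fun c => ⟨_, _, Nat.sum_range_mul_pow_lt a ha _, r _, hr _, hg _⟩
  have hT : 0 < (d₂ - d₁) * m := Nat.mul_pos (Nat.sub_pos_of_lt hd) hm
  have hN : l + d₂ * m = l + d₁ * m + (d₂ - d₁) * m := by
    rw [add_assoc, ← add_mul, Nat.add_sub_cancel' hd.le]
  have h₁ := hfx (l + d₁ * m)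
  have h₂ := hfx (l + d₂ * m)
  have hr₂ := hr (l + d₂ * m)
  rw [htail] at h₁ h₂
  rw [← hgd, hN] at h₂
  rw [hN] at hr₂
  obtain ⟨s, hs, hz⟩ := exists_eq_add_pow_mul_self (hr _) hr₂ (h₁.symm.trans h₂)
  change HasEventuallyPeriodicDigits p (f (digitSeries p a))
  rw [h₁]
  exact (hasEventuallyPeriodicDigits_of_eq_add_pow_mul_self hT hs hz).natCast_add_pow_mul (hr _)
end

section
/- Let p be a prime, f : ℤ_p → ℤ_p a 1-Lipschitz function, and let (k, m) and (k', m') be vertices (k, k' ≥ 0, 0 ≤ m < p^k, 0 ≤ m' < p^{k'}) with sections h and h' of f, respectively. If h = h' as functions and b^f_{m + y·p^k} = b^f_{m' + y·p^{k'}} for every integer y with 0 ≤ y < p, then b^f_{m + n·p^k} = b^f_{m' + n·p^{k'}} for every integer n ≥ 0. (In other words, the pair consisting of the section of f at a vertex v and the first-level reduced van der Put coefficients below v completely determines the section of the sequence (b^f_n) at v.) -/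
/-- The van der Put coefficients of `f : ℤ_p → ℤ_p`:
`B^f_n = f(n)` for `0 ≤ n < p` and `B^f_n = f(n) - f(n mod p^⌊log_p n⌋)` for `n ≥ p`. -/
noncomputable def vdpB (p : ℕ) [Fact p.Prime] (f : PadicInt p → PadicInt p) (n : ℕ) :
    PadicInt p :=
  if n < p then f n else f n - f ((n % p ^ Nat.log p n : ℕ))

/-!
For `n ≥ p` the vertex `m + n·p^k` lies at level `k + ⌊log_p n⌋` and its truncation is
`m + (n mod p^⌊log_p n⌋)·p^k`, so the section identity `f(m + p^k·y) = r + p^k·h(y)` gives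
`B^f_{m + n·p^k} = p^k · B^h_n`. Hence `p^⌊log_p n⌋ · b^f_{m + n·p^k} = B^h_n` depends only on
the section `h`, while for `n < p` the coefficients agree by hypothesis.
-/

namespace Nat

variable {b k m : ℕ}

lemma add_mul_pow_div (hm : m < b ^ k) (n : ℕ) : (m + n * b ^ k) / b ^ k = n := by
  rw [Nat.add_mul_div_right _ _ ((zero_le m).trans_lt hm), Nat.div_eq_of_lt hm, zero_add]

lemma log_add_mul_pow (hb : 1 < b) (hm : m < b ^ k) {n : ℕ} (hn : n ≠ 0) :
    log b (m + n * b ^ k) = k + log b n := by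
  have hk : k ≤ log b (m + n * b ^ k) :=
    le_log_of_pow_le hb ((Nat.le_mul_of_pos_left _ (pos_of_ne_zero hn)).trans (le_add_left _ m))
  have hdiv := log_div_base_pow b (m + n * b ^ k) k
  rw [add_mul_pow_div hm] at hdiv
  omega

lemma add_mul_pow_mod_pow_add (hm : m < b ^ k) (n l : ℕ) :
    (m + n * b ^ k) % b ^ (k + l) = m + n % b ^ l * b ^ k := by
  rw [pow_add, Nat.mod_mul, Nat.add_mul_mod_self_right, Nat.mod_eq_of_lt hm,
    add_mul_pow_div hm, mul_comm]

end Nat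

namespace IsSection

variable {p : ℕ} [Fact p.Prime] {f h : ℤ_[p] → ℤ_[p]} {k m : ℕ}

lemma sub_apply_add_mul_pow (hsec : IsSection p f h k m) (n n' : ℕ) :
    f ((m + n * p ^ k : ℕ)) - f ((m + n' * p ^ k : ℕ)) = p ^ k * (h n - h n') := by
  obtain ⟨r, -, hr⟩ := hsec
  push_cast
  rw [mul_comm (n : ℤ_[p]), mul_comm (n' : ℤ_[p]), hr, hr]
  ring

lemma vdpB_add_mul_pow (hsec : IsSection p f h k m) (hm : m < p ^ k) {n : ℕ} (hn : p ≤ n) :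
    vdpB p f (m + n * p ^ k) = p ^ k * vdpB p h n := by
  have hp : 1 < p := (Fact.out : p.Prime).one_lt
  have hlt : ¬ m + n * p ^ k < p :=
    not_lt.2 (hn.trans ((Nat.le_mul_of_pos_right n (by positivity)).trans (Nat.le_add_left _ m)))
  unfold vdpB
  rw [if_neg hlt, if_neg (not_lt.2 hn), Nat.log_add_mul_pow hp hm (by omega),
    Nat.add_mul_pow_mod_pow_add hm]
  exact hsec.sub_apply_add_mul_pow _ _

lemma pow_log_mul_coeff_add_mul_pow (hsec : IsSection p f h k m) (hm : m < p ^ k)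
    {bf : ℕ → ℤ_[p]} (hbf : ∀ n : ℕ, (p : ℤ_[p]) ^ Nat.log p n * bf n = vdpB p f n)
    {n : ℕ} (hn : p ≤ n) :
    (p : ℤ_[p]) ^ Nat.log p n * bf (m + n * p ^ k) = vdpB p h n := by
  have hp : p.Prime := Fact.out
  have hn0 : n ≠ 0 := by have := hp.one_lt; omega
  apply mul_left_cancel₀ (pow_ne_zero k (Nat.cast_ne_zero.2 hp.ne_zero))
  rw [← mul_assoc, ← pow_add, ← Nat.log_add_mul_pow hp.one_lt hm hn0, hbf,
    hsec.vdpB_add_mul_pow hm hn]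

end IsSection

theorem section_and_first_level_determine_coefficients_general (p : ℕ) [Fact p.Prime]
    (f : PadicInt p → PadicInt p)
    -- `bf` is the sequence of reduced van der Put coefficients of `f`
    (bf : ℕ → PadicInt p)
    (hbf : ∀ n : ℕ, (p : PadicInt p) ^ Nat.log p n * bf n = vdpB p f n)
    (k m k' m' : ℕ) (hm : m < p ^ k) (hm' : m' < p ^ k')
    (h h' : PadicInt p → PadicInt p)
    (hsec : IsSection p f h k m) (hsec' : IsSection p f h' k' m')
    (hhh : h = h')
    (hfirst : ∀ y : ℕ, y < p → bf (m + y * p ^ k) = bf (m' + y * p ^ k')) :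
    ∀ n : ℕ, bf (m + n * p ^ k) = bf (m' + n * p ^ k') := by
  intro n
  rcases lt_or_ge n p with hn | hn
  · exact hfirst n hn
  · subst hhh
    have hp : (p : PadicInt p) ≠ 0 := Nat.cast_ne_zero.2 (Fact.out : p.Prime).ne_zero
    exact mul_left_cancel₀ (pow_ne_zero (Nat.log p n) hp) <|
      (hsec.pow_log_mul_coeff_add_mul_pow hm hbf hn).trans
        (hsec'.pow_log_mul_coeff_add_mul_pow hm' hbf hn).symm

/-- If the sections of a 1-Lipschitz `f` at two vertices `(k, m)` and `(k', m')`
coincide, and the first-level reduced van der Put coefficients below the two vertices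
coincide, then the full sections of the coefficient sequence at the two vertices
coincide. -/
theorem section_and_first_level_determine_coefficients (p : ℕ) [Fact p.Prime]
    (f : PadicInt p → PadicInt p)
    (hf : ∀ x y : PadicInt p, ‖f x - f y‖ ≤ ‖x - y‖)
    -- `bf` is the sequence of reduced van der Put coefficients of `f`
    (bf : ℕ → PadicInt p)
    (hbf : ∀ n : ℕ, (p : PadicInt p) ^ Nat.log p n * bf n = vdpB p f n)
    (k m k' m' : ℕ) (hm : m < p ^ k) (hm' : m' < p ^ k')
    (h h' : PadicInt p → PadicInt p)
    (hsec : IsSection p f h k m) (hsec' : IsSection p f h' k' m')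
    (hhh : h = h')
    (hfirst : ∀ y : ℕ, y < p → bf (m + y * p ^ k) = bf (m' + y * p ^ k')) :
    ∀ n : ℕ, bf (m + n * p ^ k) = bf (m' + n * p ^ k') :=
  section_and_first_level_determine_coefficients_general p f bf hbf k m k' m' hm hm' h h' hsec hsec'
    hhh hfirst
end
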